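/- arXiv:1407.5329 — 6 statements merged into one kernel-verified Lean document; each statement's English description precedes it below -/
import Mathlib

section
/- For the polynomial map F : ℂ³ → ℂ³ defined by F(x₁,x₂,x₃) = (x₁, x₂, x₁x₂x₃), the asymptotic set S_F equals the union of the two coordinate hyperplanes {α₁ = 0} ∪ {α₂ = 0}. -/
/-!
Away from the hyperplanes `α₁ = 0` and `α₂ = 0` the map has the continuous inverse
`α ↦ (α₁, α₂, α₃ / (α₁ α₂))`, so any sequence whose image converges there converges itself and
cannot escape to infinity. Conversely, `(0, b, c)` is reached along `(c / (b t), b, t)` if `b ≠ 0`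
and along `(1 / t, c / t, t²)` if `b = 0`, as `t → ∞`; the case `α₂ = 0` follows by exchanging
the first two coordinates, which does not change the product `x₁ x₂ x₃`.
-/

open Filter Topology Bornology

/-- The asymptotic set of a map `F : ℂ³ → ℂ³`. -/
def asymptoticSet (F : ℂ × ℂ × ℂ → ℂ × ℂ × ℂ) : Set (ℂ × ℂ × ℂ) :=
  {a | ∃ ξ : ℕ → ℂ × ℂ × ℂ,
    Tendsto (fun k => ‖ξ k‖) atTop atTop ∧ Tendsto (fun k => F (ξ k)) atTop (𝓝 a)}

lemma mem_asymptoticSet_iff {F : ℂ × ℂ × ℂ → ℂ × ℂ × ℂ} {a : ℂ × ℂ × ℂ} :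
    a ∈ asymptoticSet F ↔
      ∃ ξ : ℕ → ℂ × ℂ × ℂ, Tendsto ξ atTop (cobounded _) ∧ Tendsto (F ∘ ξ) atTop (𝓝 a) := by
  simp only [asymptoticSet, Set.mem_ofPred_eq, tendsto_norm_atTop_iff_cobounded, Function.comp_def]

lemma tendsto_prodMk_cobounded_of_tendsto_cobounded {α E F G : Type*} [SeminormedAddGroup E]
    [SeminormedAddGroup F] [SeminormedAddGroup G] {l : Filter α} (u : α → E) (v : α → F)
    {w : α → G} (hw : Tendsto w l (cobounded G)) :
    Tendsto (fun k => (u k, v k, w k)) l (cobounded (E × F × G)) := by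
  rw [← tendsto_norm_atTop_iff_cobounded] at hw ⊢
  exact tendsto_atTop_mono (fun k => (norm_snd_le _).trans (norm_snd_le (u k, v k, w k))) hw

lemma tendsto_of_tendsto_mul_mul_of_ne_zero {α : Type*} {l : Filter α} {ξ : α → ℂ × ℂ × ℂ}
    {a : ℂ × ℂ × ℂ} (h₁ : a.1 ≠ 0) (h₂ : a.2.1 ≠ 0)
    (h : Tendsto (fun k => ((ξ k).1, (ξ k).2.1, (ξ k).1 * (ξ k).2.1 * (ξ k).2.2)) l (𝓝 a)) :
    Tendsto ξ l (𝓝 (a.1, a.2.1, a.2.2 / (a.1 * a.2.1))) := by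
  have hu := h.fst_nhds
  have hv := h.snd_nhds.fst_nhds
  have huv := hu.mul hv
  have hw : Tendsto (fun k => (ξ k).2.2) l (𝓝 (a.2.2 / (a.1 * a.2.1))) := by
    refine (h.snd_nhds.snd_nhds.div huv (mul_ne_zero h₁ h₂)).congr' ?_
    filter_upwards [huv.eventually_ne (mul_ne_zero h₁ h₂)] with k hk
    exact mul_div_cancel_left₀ _ hk
  exact hu.prodMk_nhds (hv.prodMk_nhds hw)

lemma exists_tendsto_zero_tendsto_cobounded_mul_mul_eq (b c : ℂ) :
    ∃ p q w : ℕ → ℂ, Tendsto p atTop (𝓝 0) ∧ Tendsto q atTop (𝓝 b) ∧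
      Tendsto w atTop (cobounded ℂ) ∧ ∀ k, p k * q k * w k = c := by
  set t : ℕ → ℂ := fun k => ((k + 1 : ℕ) : ℂ)
  have ht : Tendsto t atTop (cobounded ℂ) :=
    tendsto_natCast_atTop_cobounded.comp (tendsto_add_atTop_nat 1)
  have ht_inv : Tendsto (fun k => (t k)⁻¹) atTop (𝓝 0) := tendsto_inv₀_cobounded.comp ht
  have ht0 (k : ℕ) : t k ≠ 0 := Nat.cast_ne_zero.2 k.succ_ne_zero
  by_cases hb : b = 0
  · refine ⟨fun k => (t k)⁻¹, fun k => c * (t k)⁻¹, fun k => t k ^ 2, ht_inv, ?_,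
      (tendsto_pow_cobounded_cobounded two_ne_zero).comp ht, fun k => by field_simp [ht0 k]⟩
    simpa [hb] using ht_inv.const_mul c
  · refine ⟨fun k => c / b * (t k)⁻¹, fun _ => b, t, ?_, tendsto_const_nhds, ht,
      fun k => by field_simp [ht0 k]⟩
    simpa using ht_inv.const_mul (c / b)

theorem stmt_3 :
    asymptoticSet (fun x : ℂ × ℂ × ℂ => (x.1, x.2.1, x.1 * x.2.1 * x.2.2)) =
      {a : ℂ × ℂ × ℂ | a.1 = 0} ∪ {a : ℂ × ℂ × ℂ | a.2.1 = 0} := by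
  ext a
  rw [mem_asymptoticSet_iff]
  constructor
  · rintro ⟨ξ, hξ, hF⟩
    show a.1 = 0 ∨ a.2.1 = 0
    by_contra! ⟨h₁, h₂⟩
    exact not_tendsto_atTop_of_tendsto_nhds (tendsto_of_tendsto_mul_mul_of_ne_zero h₁ h₂ hF).norm
      (tendsto_norm_atTop_iff_cobounded.2 hξ)
  · rintro (ha | ha : a.1 = 0 ∨ a.2.1 = 0)
    · obtain ⟨p, q, w, hp, hq, hw, hpqw⟩ :=
        exists_tendsto_zero_tendsto_cobounded_mul_mul_eq a.2.1 a.2.2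
      refine ⟨_, tendsto_prodMk_cobounded_of_tendsto_cobounded p q hw, ?_⟩
      have h := hp.prodMk_nhds (hq.prodMk_nhds (tendsto_const_nhds (x := a.2.2)))
      rw [← ha] at h
      simpa only [Function.comp_def, hpqw] using h
    · obtain ⟨p, q, w, hp, hq, hw, hpqw⟩ :=
        exists_tendsto_zero_tendsto_cobounded_mul_mul_eq a.1 a.2.2
      refine ⟨_, tendsto_prodMk_cobounded_of_tendsto_cobounded q p hw, ?_⟩
      have h := hq.prodMk_nhds (hp.prodMk_nhds (tendsto_const_nhds (x := a.2.2)))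
      rw [← ha] at h
      simpa only [Function.comp_def, mul_comm (q _), hpqw] using h
end

section
/- For the polynomial map F : ℂ² → ℂ² defined by F(x₁,x₂) = ((x₁x₂)², (x₁x₂)³ + x₁), if γ : (0,∞) → ℂ² is a curve with ‖γ(u)‖ → ∞ such that F(γ(u)) converges, then γ₁(u) does not tend to infinity while γ₂(u) tends to infinity. -/
/-! Along the curve, the first coordinate of `F` is `p²` with `p = x₁x₂`, so `p` stays bounded;
then `x₁ = F₂ - p³` stays bounded too. Since `‖γ‖ = max ‖x₁‖ ‖x₂‖ → ∞`, the norm must be carried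
by `x₂`. -/

open Filter Topology Asymptotics

theorem Filter.Tendsto.isBigO_one_of_pow {α 𝕜 : Type*} [NormedDivisionRing 𝕜] {l : Filter α}
    {f : α → 𝕜} {n : ℕ} {b : 𝕜} (hn : n ≠ 0) (h : Tendsto (fun x => f x ^ n) l (𝓝 b)) :
    f =O[l] fun _ => (1 : ℝ) :=
  IsBigO.of_pow hn <| by simpa only [Pi.pow_def, one_pow] using h.isBigO_one ℝ

theorem tendsto_norm_snd_of_isBigO_one_fst {α E F : Type*} [SeminormedAddCommGroup E]
    [SeminormedAddCommGroup F] {l : Filter α} {γ : α → E × F}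
    (hγ : Tendsto (fun x => ‖γ x‖) l atTop) (hfst : (fun x => (γ x).1) =O[l] fun _ => (1 : ℝ)) :
    Tendsto (fun x => ‖(γ x).2‖) l atTop := by
  obtain ⟨C, hC⟩ := (isBigO_one_iff ℝ).1 hfst
  refine tendsto_atTop_mono' l ?_ hγ
  filter_upwards [hγ.eventually_gt_atTop C, hC] with x hgt hle
  have : ‖γ x‖ ≤ max ‖(γ x).1‖ ‖(γ x).2‖ := le_rfl
  exact (le_max_iff.1 this).resolve_left (not_le.2 (lt_of_le_of_lt hle hgt))

theorem stmt_6 (F : ℂ × ℂ → ℂ × ℂ)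
    (hF : F = fun x : ℂ × ℂ => ((x.1 * x.2) ^ 2, (x.1 * x.2) ^ 3 + x.1))
    (γ : ℝ → ℂ × ℂ) (a : ℂ × ℂ)
    (hinf : Tendsto (fun u => ‖γ u‖) atTop atTop)
    (hconv : Tendsto (fun u => F (γ u)) atTop (𝓝 a)) :
    ¬ Tendsto (fun u => ‖(γ u).1‖) atTop atTop ∧
      Tendsto (fun u => ‖(γ u).2‖) atTop atTop := by
  subst hF
  have hprod : (fun u => (γ u).1 * (γ u).2) =O[atTop] fun _ => (1 : ℝ) :=
    ((continuous_fst.tendsto a).comp hconv).isBigO_one_of_pow two_ne_zero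
  have hcube : (fun u => ((γ u).1 * (γ u).2) ^ 3) =O[atTop] fun _ => (1 : ℝ) := by
    simpa using hprod.pow 3
  have hfst : (fun u => (γ u).1) =O[atTop] fun _ => (1 : ℝ) := by
    simpa using (((continuous_snd.tendsto a).comp hconv).isBigO_one ℝ).sub hcube
  refine ⟨fun h => ?_, tendsto_norm_snd_of_isBigO_one_fst hinf hfst⟩
  exact not_isBoundedUnder_of_tendsto_atTop h ((isBigO_one_iff ℝ).1 hfst)
end

section
/- For the polynomial map F : ℂ³ → ℂ³ defined by F(x₁,x₂,x₃) = ((x₁x₂)², (x₂x₃)², x₁x₂²x₃ + x₂), the asymptotic set S_F is the quadratic cone { (α₁, α₂, α₃) ∈ ℂ³ : α₃² = α₁α₂ }. -/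
open Filter Topology

/-!
Along a sequence `x` escaping to infinity with `F(x)` convergent, `u = x₁x₂` and `v = x₂x₃` are
bounded (their squares converge), hence so is `x₂ = F₃(x) - uv`, hence so is `x₂ • x = (u, x₂², v)`;
thus `‖x₂‖ = O(1/‖x‖) → 0`, and the identity `(F₃(x) - x₂)² = F₁(x) F₂(x)` passes to the limit.

Conversely, write a point of the cone as `(α², β², αβ)` with `0 ≤ re α`. The curve
`t ↦ ((α + t)/t², t², β/t²)`, `t → 0⁺`, has image `((α + t)², β², (α + t)β + t²) → (α², β², αβ)`,
and escapes to infinity because `‖α + t‖ ≥ re (α + t) ≥ t` makes its first coordinate at least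
`1/t`.
-/

open Asymptotics

section

variable {ι 𝕜 : Type*} [NormedField 𝕜] {l : Filter ι}

theorem Asymptotics.IsBigO.one_of_pow {f : ι → 𝕜} {n : ℕ} (hn : n ≠ 0)
    (h : (fun k => f k ^ n) =O[l] fun _ => (1 : ℝ)) : f =O[l] fun _ => (1 : ℝ) :=
  IsBigO.of_pow hn (by simpa [Pi.pow_def] using h)

theorem tendsto_zero_of_isBigO_one_smul {E : Type*} [NormedAddCommGroup E] [NormedSpace 𝕜 E]
    {c : ι → 𝕜} {ξ : ι → E} (hξ : Tendsto (fun k => ‖ξ k‖) l atTop)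
    (h : (fun k => c k • ξ k) =O[l] fun _ => (1 : ℝ)) : Tendsto c l (𝓝 0) := by
  have hc : c =O[l] fun k => ‖ξ k‖⁻¹ := by
    refine isBigO_norm_left.mp ((h.norm_left.mul (isBigO_refl (fun k => ‖ξ k‖⁻¹) l)).congr' ?_ ?_)
    · filter_upwards [hξ.eventually_gt_atTop 0] with k hk
      rw [norm_smul, mul_inv_cancel_right₀ hk.ne']
    · exact Eventually.of_forall fun k => one_mul _
  exact hc.trans_tendsto (tendsto_inv_atTop_zero.comp hξ)

end

def coneMap (x : ℂ × ℂ × ℂ) : ℂ × ℂ × ℂ :=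
  ((x.1 * x.2.1) ^ 2, (x.2.1 * x.2.2) ^ 2, x.1 * x.2.1 ^ 2 * x.2.2 + x.2.1)

def quadraticCone : Set (ℂ × ℂ × ℂ) := {a | a.2.2 ^ 2 = a.1 * a.2.1}

theorem coneMap_thd_sub_snd_sq (x : ℂ × ℂ × ℂ) :
    ((coneMap x).2.2 - x.2.1) ^ 2 = (coneMap x).1 * (coneMap x).2.1 := by
  simp only [coneMap]; ring

theorem tendsto_snd_fst_zero_of_tendsto_coneMap {ι : Type*} {l : Filter ι} {ξ : ι → ℂ × ℂ × ℂ}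
    {a : ℂ × ℂ × ℂ} (hξ : Tendsto (fun k => ‖ξ k‖) l atTop)
    (hF : Tendsto (fun k => coneMap (ξ k)) l (𝓝 a)) :
    Tendsto (fun k => (ξ k).2.1) l (𝓝 0) := by
  have hu : (fun k => (ξ k).1 * (ξ k).2.1) =O[l] fun _ => (1 : ℝ) :=
    IsBigO.one_of_pow two_ne_zero (hF.fst_nhds.isBigO_one ℝ)
  have hv : (fun k => (ξ k).2.1 * (ξ k).2.2) =O[l] fun _ => (1 : ℝ) :=
    IsBigO.one_of_pow two_ne_zero (hF.snd_nhds.fst_nhds.isBigO_one ℝ)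
  have huv : (fun k => (ξ k).1 * (ξ k).2.1 * ((ξ k).2.1 * (ξ k).2.2)) =O[l]
      fun _ => (1 : ℝ) := by
    simpa using hu.mul hv
  have hx : (fun k => (ξ k).2.1) =O[l] fun _ => (1 : ℝ) := by
    refine ((hF.snd_nhds.snd_nhds.isBigO_one ℝ).sub huv).congr_left fun k => ?_
    simp only [coneMap]; ring
  have hxx : (fun k => (ξ k).2.1 * (ξ k).2.1) =O[l] fun _ => (1 : ℝ) := by
    simpa using hx.mul hx
  refine tendsto_zero_of_isBigO_one_smul hξ ?_
  refine (hu.prod_left (hxx.prod_left hv)).congr_left fun k => ?_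
  ext <;> simp [mul_comm]

theorem asymptoticSet_coneMap_subset : asymptoticSet coneMap ⊆ quadraticCone := by
  rintro a ⟨ξ, hξ, hF⟩
  have hx := tendsto_snd_fst_zero_of_tendsto_coneMap hξ hF
  have hlhs := (hF.snd_nhds.snd_nhds.sub hx).pow 2
  have hrhs := hF.fst_nhds.mul hF.snd_nhds.fst_nhds
  rw [sub_zero] at hlhs
  exact tendsto_nhds_unique (hlhs.congr fun k => coneMap_thd_sub_snd_sq (ξ k)) hrhs

theorem exists_sqrt_pair_of_mem_quadraticCone {a : ℂ × ℂ × ℂ} (ha : a ∈ quadraticCone) :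
    ∃ α β : ℂ, 0 ≤ α.re ∧ α ^ 2 = a.1 ∧ β ^ 2 = a.2.1 ∧ α * β = a.2.2 := by
  obtain ⟨α, hα_re, hα⟩ : ∃ α : ℂ, 0 ≤ α.re ∧ α ^ 2 = a.1 := by
    obtain ⟨α, hα⟩ := IsAlgClosed.exists_pow_nat_eq a.1 two_pos
    rcases le_total 0 α.re with h | h
    · exact ⟨α, h, hα⟩
    · exact ⟨-α, by simpa using h, by simpa using hα⟩
  obtain ⟨β, hβ⟩ := IsAlgClosed.exists_pow_nat_eq a.2.1 two_pos
  have hsq : (α * β) ^ 2 = a.2.2 ^ 2 := by rw [mul_pow, hα, hβ]; exact ha.symm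
  rcases sq_eq_sq_iff_eq_or_eq_neg.mp hsq with h | h
  · exact ⟨α, β, hα_re, hα, hβ, h⟩
  · exact ⟨α, -β, hα_re, hα, by simpa using hβ, by simp [h]⟩

theorem coneMap_curve (α β t : ℂ) (ht : t ≠ 0) :
    coneMap ((α + t) / t ^ 2, t ^ 2, β / t ^ 2) = ((α + t) ^ 2, β ^ 2, (α + t) * β + t ^ 2) := by
  simp only [coneMap, Prod.mk.injEq]
  refine ⟨?_, ?_, ?_⟩ <;> field_simp

theorem inv_le_norm_add_ofReal_div_sq {α : ℂ} (hα : 0 ≤ α.re) {t : ℝ} (ht : 0 < t) :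
    t⁻¹ ≤ ‖(α + t) / (t : ℂ) ^ 2‖ := by
  rw [norm_div, norm_pow, Complex.norm_real, Real.norm_of_nonneg ht.le,
    le_div_iff₀ (by positivity)]
  calc t⁻¹ * t ^ 2 = t := by field_simp
    _ ≤ (α + t).re := by simp [hα]
    _ ≤ ‖α + t‖ := Complex.re_le_norm _

theorem quadraticCone_subset_asymptoticSet : quadraticCone ⊆ asymptoticSet coneMap := by
  intro a ha
  obtain ⟨α, β, hα_re, hα, hβ, hαβ⟩ := exists_sqrt_pair_of_mem_quadraticCone ha
  set t : ℕ → ℝ := fun n => 1 / ((n : ℝ) + 1)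
  have ht_pos (n : ℕ) : 0 < t n := Nat.one_div_pos_of_nat
  refine ⟨fun n => ((α + t n) / (t n : ℂ) ^ 2, (t n : ℂ) ^ 2, β / (t n : ℂ) ^ 2), ?_, ?_⟩
  · have hinv : Tendsto (fun n => (t n)⁻¹) atTop atTop := by
      simpa [t] using tendsto_natCast_atTop_atTop.atTop_add (tendsto_const_nhds (x := (1 : ℝ)))
    refine tendsto_atTop_mono (fun n => ?_) hinv
    exact (inv_le_norm_add_ofReal_div_sq hα_re (ht_pos n)).trans
      (norm_fst_le ((α + t n) / (t n : ℂ) ^ 2, (t n : ℂ) ^ 2, β / (t n : ℂ) ^ 2))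
  · set G : ℂ → ℂ × ℂ × ℂ := fun s => ((α + s) ^ 2, β ^ 2, (α + s) * β + s ^ 2)
    have hG : Continuous G := by fun_prop
    have hG₀ : G 0 = a := by simp [G, hα, hβ, hαβ]
    have hlim := (hG₀ ▸ hG.tendsto 0).comp
      ((Complex.continuous_ofReal.tendsto 0).comp tendsto_one_div_add_atTop_nhds_zero_nat)
    refine hlim.congr fun n => (coneMap_curve _ _ _ ?_).symm
    exact_mod_cast (ht_pos n).ne'

theorem stmt_8 :
    asymptoticSet (fun x : ℂ × ℂ × ℂ =>
        ((x.1 * x.2.1) ^ 2, (x.2.1 * x.2.2) ^ 2, x.1 * x.2.1 ^ 2 * x.2.2 + x.2.1)) =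
      {a : ℂ × ℂ × ℂ | a.2.2 ^ 2 = a.1 * a.2.1} :=
  asymptoticSet_coneMap_subset.antisymm quadraticCone_subset_asymptoticSet
end

section
/- For the polynomial map F : ℂ³ → ℂ³ defined by F(x₁,x₂,x₃) = ((x₁x₂)², (x₂x₃)², x₁x₂²x₃ + x₂) and any α, β ∈ ℂ, the curve γ(u) = (α·u, 1/u, β·u) satisfies F(γ(u)) → (α², β², αβ) as u → ∞; if moreover (α,β) ≠ (0,0), then ‖γ(u)‖ → ∞, so (α², β², αβ) ∈ S_F. -/
open Filter Topology

/-!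
Along `γ(u) = (α u, 1/u, β u)` the factors `u` and `1/u` cancel in the first two components of
`F`, and the third component is `α β + 1/u`; so `F ∘ γ` tends to `(α², β², α β)`. If
`(α, β) ≠ 0`, then `‖γ(u)‖ ≥ u ‖(α, β)‖ → ∞`, and sampling `γ` at the integers gives a sequence
witnessing `(α², β², α β) ∈ S_F`.
-/

theorem mem_asymptoticSet_of_tendsto {F : ℂ × ℂ × ℂ → ℂ × ℂ × ℂ} {γ : ℝ → ℂ × ℂ × ℂ}
    {a : ℂ × ℂ × ℂ} (hγ : Tendsto (fun u => ‖γ u‖) atTop atTop)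
    (hF : Tendsto (fun u => F (γ u)) atTop (𝓝 a)) : a ∈ asymptoticSet F :=
  ⟨fun k => γ k, hγ.comp tendsto_natCast_atTop_atTop, hF.comp tendsto_natCast_atTop_atTop⟩

theorem tendsto_norm_smul_atTop {E : Type*} [NormedAddCommGroup E] [NormedSpace ℝ E] {v : E}
    (hv : v ≠ 0) : Tendsto (fun u : ℝ => ‖u • v‖) atTop atTop := by
  refine (tendsto_id.atTop_mul_const (norm_pos_iff.mpr hv)).congr' ?_
  filter_upwards [eventually_ge_atTop 0] with u hu
  rw [norm_smul, Real.norm_of_nonneg hu, id]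

theorem norm_fst_snd_snd_le {E F G : Type*} [SeminormedAddCommGroup E]
    [SeminormedAddCommGroup F] [SeminormedAddCommGroup G] (x : E × F × G) :
    ‖(x.1, x.2.2)‖ ≤ ‖x‖ := by
  simp only [Prod.norm_def]
  exact max_le_max le_rfl (le_max_right _ _)

theorem tendsto_ofReal_inv_atTop_zero : Tendsto (fun u : ℝ => (u : ℂ)⁻¹) atTop (𝓝 0) := by
  simpa [Function.comp_def] using
    (Complex.continuous_ofReal.tendsto 0).comp tendsto_inv_atTop_zero

theorem tendsto_norm_curve_atTop {α β : ℂ} (hαβ : (α, β) ≠ (0, 0)) :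
    Tendsto (fun u : ℝ => ‖((α * u, (u : ℂ)⁻¹, β * u) : ℂ × ℂ × ℂ)‖) atTop atTop := by
  refine tendsto_atTop_mono (fun u => ?_) (tendsto_norm_smul_atTop hαβ)
  calc ‖u • (α, β)‖ = ‖((α * u, (u : ℂ)⁻¹, β * u).1, (α * u, (u : ℂ)⁻¹, β * u).2.2)‖ := by
        simp only [Prod.smul_mk, Complex.real_smul, mul_comm]
    _ ≤ _ := norm_fst_snd_snd_le _

theorem curve_image_eq (α β : ℂ) {u : ℂ} (hu : u ≠ 0) :
    ((α * u * u⁻¹) ^ 2, (u⁻¹ * (β * u)) ^ 2, α * u * u⁻¹ ^ 2 * (β * u) + u⁻¹) =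
      (α ^ 2, β ^ 2, α * β + u⁻¹) := by
  simp only [Prod.mk.injEq]
  refine ⟨?_, ?_, ?_⟩ <;> field_simp

theorem tendsto_curve_image (α β : ℂ) :
    Tendsto (fun u : ℝ => ((α * u * (u : ℂ)⁻¹) ^ 2, ((u : ℂ)⁻¹ * (β * u)) ^ 2,
      α * u * (u : ℂ)⁻¹ ^ 2 * (β * u) + (u : ℂ)⁻¹)) atTop (𝓝 (α ^ 2, β ^ 2, α * β)) := by
  have hlim : Tendsto (fun u : ℝ => (α ^ 2, β ^ 2, α * β + (u : ℂ)⁻¹)) atTop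
      (𝓝 (α ^ 2, β ^ 2, α * β)) := by
    simpa using tendsto_const_nhds.prodMk_nhds
      (tendsto_const_nhds.prodMk_nhds (tendsto_ofReal_inv_atTop_zero.const_add (α * β)))
  refine hlim.congr' ?_
  filter_upwards [eventually_gt_atTop 0] with u hu
  exact (curve_image_eq α β (Complex.ofReal_ne_zero.mpr hu.ne')).symm

theorem stmt_9 (F : ℂ × ℂ × ℂ → ℂ × ℂ × ℂ)
    (hF : F = fun x : ℂ × ℂ × ℂ =>
      ((x.1 * x.2.1) ^ 2, (x.2.1 * x.2.2) ^ 2, x.1 * x.2.1 ^ 2 * x.2.2 + x.2.1))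
    (α β : ℂ) :
    Tendsto (fun u : ℝ => F (α * u, (u : ℂ)⁻¹, β * u)) atTop
      (𝓝 (α ^ 2, β ^ 2, α * β)) ∧
    ((α, β) ≠ ((0 : ℂ), (0 : ℂ)) →
      Tendsto (fun u : ℝ => ‖((α * u, (u : ℂ)⁻¹, β * u) : ℂ × ℂ × ℂ)‖) atTop atTop ∧
      (α ^ 2, β ^ 2, α * β) ∈ asymptoticSet F) := by
  subst hF
  have hlim := tendsto_curve_image α β
  refine ⟨hlim, fun hαβ => ?_⟩
  have hnorm := tendsto_norm_curve_atTop hαβ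
  exact ⟨hnorm, mem_asymptoticSet_of_tendsto hnorm hlim⟩
end

section
/- For the polynomial map F : ℂ³ → ℂ³ defined by F(x₁,x₂,x₃) = (x₁x₂, (x₂x₃)², x₁x₂²x₃ + x₂), the asymptotic set S_F equals the Whitney umbrella { (α, β², αβ) : α, β ∈ ℂ }. -/
/-!
Write `u = x₁x₂`, `v = x₂x₃`, so that `F x = (u, v², uv + x₂)`. If `F` stays bounded along a
sequence then so do `u`, `v` and `x₂ = F₃ - uv`, hence `|x₂| · ‖x‖ ≤ max (|u|, |x₂|², |v|)` is
bounded and `x₂ → 0` when `‖x‖ → ∞`. Since `F₃² - F₁²F₂ = x₂ (2F₃ - x₂)`, every asymptotic value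
lies on the Whitney umbrella `c² = a²b`. Conversely, `F (x₁ / t, t x₂, x₃ / t)` differs from
`F x` only by `(1 - t) x₂` in the last coordinate, so letting `t → 0` reaches every point
`(x₁x₂, (x₂x₃)², x₁x₂²x₃)` of the umbrella.
-/

open Filter Topology

def umbrellaMap (x : ℂ × ℂ × ℂ) : ℂ × ℂ × ℂ :=
  (x.1 * x.2.1, (x.2.1 * x.2.2) ^ 2, x.1 * x.2.1 ^ 2 * x.2.2 + x.2.1)

lemma exists_eq_of_sq_eq_sq_mul {K : Type*} [Field K] [IsAlgClosed K] {a : K × K × K}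
    (h : a.2.2 ^ 2 = a.1 ^ 2 * a.2.1) : ∃ α β : K, a = (α, β ^ 2, α * β) := by
  obtain ⟨a, b, c⟩ := a
  by_cases ha : a = 0
  · obtain ⟨β, rfl⟩ := IsAlgClosed.exists_pow_nat_eq b two_pos
    subst ha
    have hc : c = 0 := pow_eq_zero_iff two_ne_zero |>.mp (by simpa using h)
    exact ⟨0, β, by simp [hc]⟩
  · refine ⟨a, c / a, ?_⟩
    have hb : b = (c / a) ^ 2 := by
      rw [div_pow, eq_div_iff (pow_ne_zero 2 ha)]
      linear_combination -h
    simp [hb, mul_div_cancel₀ c ha]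

lemma norm_snd_fst_mul_norm_le {x : ℂ × ℂ × ℂ} {R : ℝ} (hR : ‖umbrellaMap x‖ ≤ R) :
    ‖x.2.1‖ * ‖x‖ ≤ 1 + R + (R * (2 + R)) ^ 2 := by
  obtain ⟨x₁, x₂, x₃⟩ := x
  have hu : ‖x₁ * x₂‖ ≤ R := (norm_fst_le _).trans hR
  have hv2 : ‖(x₂ * x₃) ^ 2‖ ≤ R := ((norm_fst_le _).trans (norm_snd_le _)).trans hR
  have hw : ‖x₁ * x₂ ^ 2 * x₃ + x₂‖ ≤ R := ((norm_snd_le _).trans (norm_snd_le _)).trans hR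
  have hR0 : 0 ≤ R := (norm_nonneg _).trans hu
  have hv : ‖x₂ * x₃‖ ≤ 1 + R := by
    rw [norm_pow] at hv2
    nlinarith [norm_nonneg (x₂ * x₃)]
  have hx₂ : ‖x₂‖ ≤ R * (2 + R) :=
    calc ‖x₂‖ = ‖(x₁ * x₂ ^ 2 * x₃ + x₂) - (x₁ * x₂) * (x₂ * x₃)‖ := by ring_nf
      _ ≤ R + R * (1 + R) := by
        grw [norm_sub_le, norm_mul, hw, hu, hv]
      _ = R * (2 + R) := by ring
  have hsq : ‖x₂‖ * ‖x₂‖ ≤ (R * (2 + R)) ^ 2 := by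
    rw [← sq]; gcongr
  simp only [Prod.norm_def, mul_max_of_nonneg _ _ (norm_nonneg x₂)]
  refine max_le ?_ (max_le ?_ ?_)
  · rw [← norm_mul, mul_comm]; nlinarith [sq_nonneg (R * (2 + R))]
  · nlinarith
  · rw [← norm_mul]; nlinarith [sq_nonneg (R * (2 + R))]

lemma tendsto_snd_fst_of_tendsto_umbrellaMap {ξ : ℕ → ℂ × ℂ × ℂ} {a : ℂ × ℂ × ℂ}
    (hξ : Tendsto (fun k => ‖ξ k‖) atTop atTop)
    (hF : Tendsto (fun k => umbrellaMap (ξ k)) atTop (𝓝 a)) :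
    Tendsto (fun k => (ξ k).2.1) atTop (𝓝 0) := by
  set M := 1 + (‖a‖ + 1) + ((‖a‖ + 1) * (2 + (‖a‖ + 1))) ^ 2
  rw [tendsto_zero_iff_norm_tendsto_zero]
  refine squeeze_zero' (.of_forall fun k => norm_nonneg _) ?_
    (tendsto_const_nhds.div_atTop hξ (a := M))
  filter_upwards [hξ.eventually_gt_atTop 0, hF.norm.eventually_le_const (lt_add_one ‖a‖)]
    with k hk hFk
  rw [le_div_iff₀ hk]
  exact norm_snd_fst_mul_norm_le hFk

lemma umbrellaMap_defect (x : ℂ × ℂ × ℂ) :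
    (umbrellaMap x).2.2 ^ 2 - (umbrellaMap x).1 ^ 2 * (umbrellaMap x).2.1 =
      x.2.1 * (2 * (umbrellaMap x).2.2 - x.2.1) := by
  simp only [umbrellaMap]; ring

lemma sq_eq_of_mem_asymptoticSet {a : ℂ × ℂ × ℂ} (ha : a ∈ asymptoticSet umbrellaMap) :
    a.2.2 ^ 2 = a.1 ^ 2 * a.2.1 := by
  obtain ⟨ξ, hξ, hF⟩ := ha
  have hdefect : Continuous fun b : ℂ × ℂ × ℂ => b.2.2 ^ 2 - b.1 ^ 2 * b.2.1 := by fun_prop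
  have hlim := (hdefect.tendsto a).comp hF
  have hzero : Tendsto (fun k => (ξ k).2.1 * (2 * (umbrellaMap (ξ k)).2.2 - (ξ k).2.1))
      atTop (𝓝 0) := by
    have hx₂ := tendsto_snd_fst_of_tendsto_umbrellaMap hξ hF
    have hF₃ : Tendsto (fun k => (umbrellaMap (ξ k)).2.2) atTop (𝓝 a.2.2) :=
      ((continuous_snd.comp continuous_snd).tendsto a).comp hF
    simpa using hx₂.mul ((hF₃.const_mul 2).sub hx₂)
  simp only [Function.comp_def, umbrellaMap_defect] at hlim
  exact sub_eq_zero.mp (tendsto_nhds_unique hlim hzero)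

lemma mem_asymptoticSet_umbrellaMap (x : ℂ × ℂ × ℂ) (hx : x.1 ≠ 0 ∨ x.2.2 ≠ 0) :
    (x.1 * x.2.1, (x.2.1 * x.2.2) ^ 2, x.1 * x.2.1 ^ 2 * x.2.2) ∈
      asymptoticSet umbrellaMap := by
  obtain ⟨x₁, x₂, x₃⟩ := x
  refine ⟨fun k => ((k : ℂ) * x₁, (k : ℂ)⁻¹ * x₂, (k : ℂ) * x₃), ?_, ?_⟩
  · have hm : 0 < max ‖x₁‖ ‖x₃‖ := by
      rcases hx with h | h
      · exact lt_max_of_lt_left (norm_pos_iff.mpr h)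
      · exact lt_max_of_lt_right (norm_pos_iff.mpr h)
    refine tendsto_atTop_mono (fun k => ?_) (tendsto_natCast_atTop_atTop.atTop_mul_const hm)
    rw [mul_max_of_nonneg _ _ k.cast_nonneg]
    simp only [Prod.norm_def, norm_mul, Complex.norm_natCast]
    exact max_le_max (le_refl _) (le_max_right _ _)
  · have hG : Continuous fun t : ℂ =>
        (x₁ * x₂, (x₂ * x₃) ^ 2, x₁ * x₂ ^ 2 * x₃ + t * x₂) := by fun_prop
    refine Tendsto.congr' ?_ (by simpa using (hG.tendsto 0).comp tendsto_inv_atTop_nhds_zero_nat)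
    filter_upwards [eventually_ne_atTop 0] with k hk
    have hk : (k : ℂ) ≠ 0 := Nat.cast_ne_zero.mpr hk
    simp only [Function.comp_apply, umbrellaMap, Prod.mk.injEq]
    refine ⟨?_, ?_, ?_⟩ <;> field_simp

theorem stmt_10 :
    asymptoticSet (fun x : ℂ × ℂ × ℂ =>
        (x.1 * x.2.1, (x.2.1 * x.2.2) ^ 2, x.1 * x.2.1 ^ 2 * x.2.2 + x.2.1)) =
      {a : ℂ × ℂ × ℂ | ∃ α β : ℂ, a = (α, β ^ 2, α * β)} := by
  change asymptoticSet umbrellaMap = _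
  ext a
  refine ⟨fun ha => exists_eq_of_sq_eq_sq_mul (sq_eq_of_mem_asymptoticSet ha), ?_⟩
  rintro ⟨α, β, rfl⟩
  by_cases h : α = 0 ∧ β = 0
  · obtain ⟨rfl, rfl⟩ := h
    simpa using mem_asymptoticSet_umbrellaMap (1, 0, 0) (by simp)
  · simpa using mem_asymptoticSet_umbrellaMap (α, 1, β) (by tauto)
end

section
/- For the polynomial map F : ℂ³ → ℂ³ defined by F(x₁,x₂,x₃) = (x₁x₂ + x₃, x₂x₃ + x₃x₁, x₁x₂ + x₂x₃ + x₃x₁), the asymptotic set S_F is contained in the plane { (α₁,α₂,α₃) ∈ ℂ³ : α₃ = α₁ + α₂ }. -/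
open Filter Topology

/-!
Write `F = (x₁x₂ + x₃, x₃(x₁ + x₂), x₁x₂ + x₃(x₁ + x₂))`, so that `F₁ + F₂ - F₃ = x₃`.
Along a sequence with `F(ξ_k) → a`, the coordinate `x₃` therefore tends to
`c = a₁ + a₂ - a₃`. If `c ≠ 0`, then `x₁ + x₂ = F₂ / x₃` and `x₁x₂ = F₁ - x₃` converge, so
`x₁, x₂` are roots of a monic quadratic with bounded coefficients and stay bounded; then
`ξ_k` is bounded, which is impossible when `‖ξ_k‖ → ∞`. Hence `c = 0`.
-/

section RootBound

variable {K : Type*} [NormedField K]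

theorem norm_le_max_one_norm_add_add_norm_mul (u v : K) :
    ‖u‖ ≤ max 1 (‖u + v‖ + ‖u * v‖) := by
  rcases le_or_gt ‖u‖ 1 with hu | hu
  · exact le_max_of_le_left hu
  refine le_max_of_le_right ?_
  have hsq : ‖u‖ * ‖u‖ ≤ (‖u + v‖ + ‖u * v‖) * ‖u‖ :=
    calc ‖u‖ * ‖u‖ = ‖(u + v) * u - u * v‖ := by rw [← norm_mul]; ring_nf
      _ ≤ ‖u + v‖ * ‖u‖ + ‖u * v‖ := by rw [← norm_mul]; exact norm_sub_le _ _
      _ ≤ (‖u + v‖ + ‖u * v‖) * ‖u‖ := by nlinarith [norm_nonneg (u * v)]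
  exact le_of_mul_le_mul_right hsq (by linarith)

theorem isBoundedUnder_norm_of_add_of_mul {ι : Type*} {l : Filter ι} {f g : ι → K}
    (hadd : IsBoundedUnder (· ≤ ·) l fun k => ‖f k + g k‖)
    (hmul : IsBoundedUnder (· ≤ ·) l fun k => ‖f k * g k‖) :
    IsBoundedUnder (· ≤ ·) l fun k => ‖f k‖ :=
  (isBoundedUnder_const.sup (isBoundedUnder_le_add hadd hmul)).mono_le
    (Eventually.of_forall fun k => norm_le_max_one_norm_add_add_norm_mul (f k) (g k))

end RootBound

theorem stmt_11 :
    asymptoticSet (fun x : ℂ × ℂ × ℂ =>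
        (x.1 * x.2.1 + x.2.2, x.2.1 * x.2.2 + x.2.2 * x.1,
          x.1 * x.2.1 + x.2.1 * x.2.2 + x.2.2 * x.1)) ⊆
      {a : ℂ × ℂ × ℂ | a.2.2 = a.1 + a.2.1} := by
  rintro a ⟨ξ, hξ, hF⟩
  have hF₁ := hF.fst_nhds
  have hF₂ := hF.snd_nhds.fst_nhds
  have hF₃ := hF.snd_nhds.snd_nhds
  set c := a.1 + a.2.1 - a.2.2
  have hz : Tendsto (fun k => (ξ k).2.2) atTop (𝓝 c) := by
    convert (hF₁.add hF₂).sub hF₃ using 2 with k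
    ring
  by_contra hne
  have hc : c ≠ 0 := sub_ne_zero.2 (Ne.symm hne)
  have hadd : Tendsto (fun k => (ξ k).1 + (ξ k).2.1) atTop (𝓝 (a.2.1 / c)) := by
    refine (hF₂.div hz hc).congr' ?_
    filter_upwards [hz.eventually_ne hc] with k hk
    simp only [Pi.div_apply]
    field_simp
    ring
  have hmul : Tendsto (fun k => (ξ k).1 * (ξ k).2.1) atTop (𝓝 (a.1 - c)) := by
    convert hF₁.sub hz using 2 with k
    ring
  have hx := isBoundedUnder_norm_of_add_of_mul hadd.norm.isBoundedUnder_le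
    hmul.norm.isBoundedUnder_le
  have hy := isBoundedUnder_norm_of_add_of_mul (f := fun k => (ξ k).2.1) (g := fun k => (ξ k).1)
    (by simpa only [add_comm] using hadd.norm.isBoundedUnder_le)
    (by simpa only [mul_comm] using hmul.norm.isBoundedUnder_le)
  exact not_isBoundedUnder_of_tendsto_atTop hξ (hx.sup (hy.sup hz.norm.isBoundedUnder_le))
end
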